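/- arXiv:0804.3880 — 2 statements merged into one kernel-verified Lean document; each statement's English description precedes it below -/
import Mathlib

section
/- Let ℓ > 0 and ϱ ∈ 𝕎 (with respect to the interval [0,ℓ]). Then the function Φ⁰_ϱ(x) := limsup_{y→0} ϱ(xy)/ϱ(y), x ∈ (0,∞), is finite-valued, regular and submultiplicative; consequently the limits m(ϱ) := lim_{x→0} log Φ⁰_ϱ(x)/log x and M(ϱ) := lim_{x→∞} log Φ⁰_ϱ(x)/log x exist and satisfy −∞ < m(ϱ) ≤ M(ϱ) < +∞. -/
open MeasureTheory Metric Set Filter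
open scoped ENNReal

noncomputable section

/-- Arc-length measure on a rectifiable curve `Γ`: the one-dimensional Hausdorff
measure restricted to `Γ`. -/
def arcMeasure (Γ : Set ℂ) : Measure ℂ := (μH[1] : Measure ℂ).restrict Γ

/-- The length `|Γ|` of the curve `Γ`. -/
def curveLength (Γ : Set ℂ) : ℝ := (arcMeasure Γ Set.univ).toReal

/-- `Γ` is a Carleson (Ahlfors–David regular) curve:
`sup_{t ∈ Γ} sup_{R > 0} |Γ(t,R)|/R < ∞`. -/
def IsCarleson (Γ : Set ℂ) : Prop :=
  ∃ C : ℝ, ∀ t ∈ Γ, ∀ R : ℝ, 0 < R → (arcMeasure Γ (ball t R)).toReal ≤ C * R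

/-- A rectifiable curve homeomorphic to a line segment: the continuous injective
image of `[0,1]` under a map of finite total variation. -/
def IsSimpleArc (Γ : Set ℂ) : Prop :=
  ∃ γ : ℝ → ℂ, ContinuousOn γ (Icc 0 1) ∧ InjOn γ (Icc 0 1) ∧
    γ '' Icc 0 1 = Γ ∧ eVariationOn γ (Icc 0 1) ≠ ⊤

/-- A rectifiable Jordan curve (homeomorphic to a circle). -/
def IsJordanCurve (Γ : Set ℂ) : Prop :=
  ∃ γ : ℝ → ℂ, ContinuousOn γ (Icc 0 1) ∧ γ 0 = γ 1 ∧ InjOn γ (Ico 0 1) ∧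
    γ '' Icc 0 1 = Γ ∧ eVariationOn γ (Icc 0 1) ≠ ⊤

/-- A simple rectifiable curve: homeomorphic either to a line segment or to a circle. -/
def IsSimpleCurve (Γ : Set ℂ) : Prop := IsSimpleArc Γ ∨ IsJordanCurve Γ

/-- The Dini–Lipschitz condition on a variable exponent `p` on the curve `Γ`:
`|p(τ) - p(t)| ≤ -A / log |τ - t|` whenever `|τ - t| ≤ 1/2`. -/
def DiniLipschitz (Γ : Set ℂ) (p : ℂ → ℝ) : Prop :=
  ∃ A : ℝ, 0 < A ∧ ∀ τ ∈ Γ, ∀ t ∈ Γ, dist τ t ≤ 1/2 →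
    |p τ - p t| ≤ -A / Real.log (dist τ t)

/-- A weight on `Γ` (with respect to its arc-length measure `μ`): a measurable
function which is a.e. positive and finite. -/
def IsWeight (μ : Measure ℂ) (w : ℂ → ℝ≥0∞) : Prop :=
  AEMeasurable w μ ∧ ∀ᵐ τ ∂μ, 0 < w τ ∧ w τ < ⊤

/-- The modular `∫ (g(τ)/λ)^{p(τ)} dμ(τ)` of the variable Lebesgue space. -/
def vModular (μ : Measure ℂ) (p : ℂ → ℝ) (g : ℂ → ℝ≥0∞) (lam : ℝ) : ℝ≥0∞ :=
  ∫⁻ τ, (g τ / ENNReal.ofReal lam) ^ p τ ∂μ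

/-- The Luxemburg–Nakano norm of an `ℝ≥0∞`-valued function. -/
def luxNorm (μ : Measure ℂ) (p : ℂ → ℝ) (g : ℂ → ℝ≥0∞) : ℝ :=
  sInf {lam : ℝ | 0 < lam ∧ vModular μ p g lam ≤ 1}

/-- The norm of `f` in the weighted variable Lebesgue space `L^{p(·)}(Γ,w)`. -/
def wNorm (μ : Measure ℂ) (p : ℂ → ℝ) (w : ℂ → ℝ≥0∞) (f : ℂ → ℂ) : ℝ :=
  luxNorm μ p fun τ => ENNReal.ofReal ‖f τ‖ * w τ

/-- Membership of `f` in the weighted variable Lebesgue space `L^{p(·)}(Γ,w)`. -/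
def MemWVL (μ : Measure ℂ) (p : ℂ → ℝ) (w : ℂ → ℝ≥0∞) (f : ℂ → ℂ) : Prop :=
  ∃ lam : ℝ, 0 < lam ∧ vModular μ p (fun τ => ENNReal.ofReal ‖f τ‖ * w τ) lam < ⊤

/-- The Cauchy singular integral operator (principal value):
`(Sf)(t) = (1/(πi)) lim_{R → 0⁺} ∫_{Γ ∖ Γ(t,R)} f(τ)/(τ - t) dτ`. -/
def cauchyS (μ : Measure ℂ) (f : ℂ → ℂ) (t : ℂ) : ℂ :=
  ((Real.pi : ℂ) * Complex.I)⁻¹ *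
    limUnder (nhdsWithin (0:ℝ) (Ioi 0))
      fun R => ∫ τ in {τ : ℂ | R ≤ dist τ t}, f τ / (τ - t) ∂μ

/-- Boundedness of the Cauchy singular integral operator on `L^{p(·)}(Γ,w)`. -/
def CauchySBounded (μ : Measure ℂ) (p : ℂ → ℝ) (w : ℂ → ℝ≥0∞) : Prop :=
  ∃ C : ℝ, 0 < C ∧ ∀ f : ℂ → ℂ, MemWVL μ p w f →
    wNorm μ p w (cauchyS μ f) ≤ C * wNorm μ p w f

/-- The class `W` on `[0,ℓ]`: continuous, vanishing at `0`, positive on `(0,ℓ]`,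
nonnegative, and almost increasing. -/
def ClassW (ℓ : ℝ) (rho : ℝ → ℝ) : Prop :=
  ContinuousOn rho (Icc 0 ℓ) ∧ rho 0 = 0 ∧ (∀ x : ℝ, 0 < x → x ≤ ℓ → 0 < rho x) ∧
    (∀ x ∈ Icc 0 ℓ, 0 ≤ rho x) ∧
    ∃ C : ℝ, 0 < C ∧ ∀ x ∈ Icc 0 ℓ, ∀ y ∈ Icc 0 ℓ, x ≤ y → rho x ≤ C * rho y

/-- The class `𝕎` on `[0,ℓ]`: `x^α ϱ(x) ∈ W` and `x^β / ϱ(x) ∈ W` for some `α, β ∈ ℝ`. -/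
def ClassWW (ℓ : ℝ) (rho : ℝ → ℝ) : Prop :=
  ∃ a b : ℝ, ClassW ℓ (fun x => x ^ a * rho x) ∧ ClassW ℓ (fun x => x ^ b / rho x)

/-- `Φ⁰_ϱ(x) = limsup_{y → 0⁺} ϱ(xy)/ϱ(y)`, as an extended nonnegative real. -/
def Phi0E (rho : ℝ → ℝ) (x : ℝ) : ℝ≥0∞ :=
  Filter.limsup (fun y => ENNReal.ofReal (rho (x * y) / rho y)) (nhdsWithin (0:ℝ) (Ioi 0))

/-- `Φ⁰_ϱ(x)` as a real number. -/
def Phi0 (rho : ℝ → ℝ) (x : ℝ) : ℝ := (Phi0E rho x).toReal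

/-- The lower Matuszewska–Orlicz index `m(ϱ) = lim_{x → 0⁺} log Φ⁰_ϱ(x) / log x`. -/
def moIndexLower (rho : ℝ → ℝ) : ℝ :=
  limUnder (nhdsWithin (0:ℝ) (Ioi 0)) fun x => Real.log (Phi0 rho x) / Real.log x

/-- The upper Matuszewska–Orlicz index `M(ϱ) = lim_{x → ∞} log Φ⁰_ϱ(x) / log x`. -/
def moIndexUpper (rho : ℝ → ℝ) : ℝ :=
  limUnder atTop fun x => Real.log (Phi0 rho x) / Real.log x

/-- Submultiplicativity of `Φ : (0,∞) → ℝ`. -/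
def Submultiplicative (Φ : ℝ → ℝ) : Prop :=
  ∀ x : ℝ, 0 < x → ∀ y : ℝ, 0 < y → Φ (x * y) ≤ Φ x * Φ y

/-- Regularity of `Φ : (0,∞) → ℝ`: boundedness in an open neighborhood of `1`. -/
def RegularFun (Φ : ℝ → ℝ) : Prop :=
  ∃ ε C : ℝ, 0 < ε ∧ ∀ x : ℝ, |x - 1| < ε → Φ x ≤ C

/-- The lower index `α(Φ) = sup_{x ∈ (0,1)} log Φ(x) / log x`. -/
def alphaInd (Φ : ℝ → ℝ) : ℝ :=
  sSup ((fun x => Real.log (Φ x) / Real.log x) '' Ioo 0 1)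

/-- The upper index `β(Φ) = inf_{x ∈ (1,∞)} log Φ(x) / log x`. -/
def betaInd (Φ : ℝ → ℝ) : ℝ :=
  sInf ((fun x => Real.log (Φ x) / Real.log x) '' Ioi 1)

/-- The mean of `log w` over the portion `Γ(t,R)` of the curve. -/
def logMean (μ : Measure ℂ) (w : ℂ → ℝ≥0∞) (t : ℂ) (R : ℝ) : ℝ :=
  (μ (ball t R)).toReal⁻¹ * ∫ τ in ball t R, Real.log ((w τ).toReal) ∂μ

/-- `H_{w,t}(R₁,R₂)`: ratio of geometric means of the weight. -/
def Hfun (μ : Measure ℂ) (w : ℂ → ℝ≥0∞) (t : ℂ) (R₁ R₂ : ℝ) : ℝ :=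
  Real.exp (logMean μ w t R₁) / Real.exp (logMean μ w t R₂)

/-- `(V⁰_t w)(x) = limsup_{R → 0⁺} H_{w,t}(xR, R)`. -/
def V0 (μ : Measure ℂ) (w : ℂ → ℝ≥0∞) (t : ℂ) (x : ℝ) : ℝ :=
  Filter.limsup (fun R => Hfun μ w t (x * R) R) (nhdsWithin (0:ℝ) (Ioi 0))

/-- The conjugate exponent `q(τ) = p(τ)/(p(τ)-1)`. -/
def conjExp (p : ℂ → ℝ) (τ : ℂ) : ℝ := p τ / (p τ - 1)

/-- The Muckenhoupt-type class `A_{p(·)}(Γ)`: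
`sup_{t ∈ Γ} sup_{R > 0} (1/R) ‖w χ_{Γ(t,R)}‖_{p(·)} ‖w⁻¹ χ_{Γ(t,R)}‖_{q(·)} < ∞`. -/
def MuckenhouptA (Γ : Set ℂ) (p : ℂ → ℝ) (w : ℂ → ℝ≥0∞) : Prop :=
  ∃ C : ℝ, ∀ t ∈ Γ, ∀ R : ℝ, 0 < R →
    luxNorm (arcMeasure Γ) p ((ball t R).indicator w) *
      luxNorm (arcMeasure Γ) (conjExp p) ((ball t R).indicator fun τ => (w τ)⁻¹) ≤ C * R

/-- The radial oscillating weight `w(τ) = ∏_{k=1}^n w_k(|τ - t_k|)`. -/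
def radialWeight {n : ℕ} (ts : Fin n → ℂ) (ws : Fin n → ℝ → ℝ) (τ : ℂ) : ℝ≥0∞ :=
  ∏ k, ENNReal.ofReal (ws k (dist τ (ts k)))

/-!
Almost monotonicity of `x ^ a * ϱ x` and `x ^ b / ϱ x` bounds `ϱ (x * y) / ϱ y` by
`C * exp (B * |log x|)` for all small `y`, so `Φ⁰_ϱ` is finite and bounded near `1`; it is
submultiplicative because `ϱ (x y z) / ϱ z` factors as `ϱ (x (y z)) / ϱ (y z) · ϱ (y z) / ϱ z`
and `y z → 0⁺` with `z`. Hence `f t = log Φ⁰_ϱ (exp t)` is subadditive with at most linear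
growth, and the continuous version of Fekete's lemma gives the limits of `f t / t` at `±∞`,
which are `m(ϱ)` and `M(ϱ)`; `f t + f (-t) ≥ f 0 ≥ 0` gives `m(ϱ) ≤ M(ϱ)`.
-/

open Real

section Fekete

variable {f : ℝ → ℝ} {A B : ℝ}

theorem subadditive_nat_mul_add_le (hsub : ∀ s t, f (s + t) ≤ f s + f t) (n : ℕ) (s r : ℝ) :
    f (n * s + r) ≤ n * f s + f r := by
  induction n with
  | zero => simp
  | succ n ih =>
    calc f ((n + 1 : ℕ) * s + r) = f (s + (n * s + r)) := by push_cast; ring_nf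
      _ ≤ f s + f (n * s + r) := hsub _ _
      _ ≤ (n + 1 : ℕ) * f s + f r := by push_cast; linarith

theorem subadditive_apply_add_apply_neg_nonneg (hsub : ∀ s t, f (s + t) ≤ f s + f t) (t : ℝ) :
    0 ≤ f t + f (-t) := by
  have h0 := hsub 0 0
  have ht := hsub t (-t)
  rw [add_zero] at h0
  rw [add_neg_cancel] at ht
  linarith

theorem subadditive_div_le (hsub : ∀ s t, f (s + t) ≤ f s + f t)
    (hlin : ∀ t, f t ≤ A + B * |t|) {s t : ℝ} (hs : 0 < s) (ht : 0 < t) :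
    f t / t ≤ f s / s + (|f s| + A + |B| * s) / t := by
  set n : ℕ := ⌊t / s⌋₊
  have hn : (n : ℝ) ≤ t / s := Nat.floor_le (by positivity)
  have hn' : t / s < n + 1 := Nat.lt_floor_add_one _
  set r := t - n * s
  have hr : 0 ≤ r ∧ r < s := by
    constructor
    · have := (le_div_iff₀ hs).1 hn; linarith
    · have := (div_lt_iff₀ hs).1 hn'; linarith
  have hfr : f r ≤ A + |B| * s := by
    have := hlin r
    rw [abs_of_nonneg hr.1] at this
    nlinarith [le_abs_self B, neg_abs_le B]
  -- `n` differs from `t / s` by less than `1`, whatever the sign of `f s`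
  have hnfs : n * f s ≤ t / s * f s + |f s| := by
    have h : |(n : ℝ) - t / s| ≤ 1 := by rw [abs_le]; constructor <;> linarith
    have := (le_abs_self _).trans_eq (abs_mul ((n : ℝ) - t / s) (f s))
    nlinarith [abs_nonneg (f s), mul_le_mul_of_nonneg_right h (abs_nonneg (f s))]
  have hft : f t ≤ t / s * f s + (|f s| + A + |B| * s) := by
    have := subadditive_nat_mul_add_le hsub n s r
    rw [show (n : ℝ) * s + r = t by ring] at this
    linarith
  calc f t / t ≤ (t / s * f s + (|f s| + A + |B| * s)) / t := by gcongr
    _ = f s / s + (|f s| + A + |B| * s) / t := by field_simp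

theorem tendsto_div_atTop_of_subadditive (hsub : ∀ s t, f (s + t) ≤ f s + f t)
    (hlin : ∀ t, f t ≤ A + B * |t|) :
    Tendsto (fun t => f t / t) atTop (nhds (sInf ((fun t => f t / t) '' Ici 1))) := by
  have hbdd : BddBelow ((fun t => f t / t) '' Ici 1) := by
    refine ⟨-|A| - B, ?_⟩
    rintro _ ⟨t, ht, rfl⟩
    have ht0 : (0 : ℝ) < t := zero_lt_one.trans_le ht
    have hlow : 0 ≤ f t + A + B * t := by
      have := hlin (-t)
      rw [abs_neg, abs_of_pos ht0] at this
      linarith [subadditive_apply_add_apply_neg_nonneg hsub t]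
    rw [le_div_iff₀ ht0]
    nlinarith [le_abs_self A, mul_nonneg (abs_nonneg A) (sub_nonneg.2 (show (1 : ℝ) ≤ t from ht))]
  rw [tendsto_order]
  refine ⟨fun c hc => ?_, fun c hc => ?_⟩
  · filter_upwards [eventually_ge_atTop 1] with t ht
    exact hc.trans_le (csInf_le hbdd ⟨t, ht, rfl⟩)
  · obtain ⟨_, ⟨s, hs, rfl⟩, hsc⟩ :=
      exists_lt_of_csInf_lt (Set.image_nonempty.2 nonempty_Ici) hc
    have hs0 : (0 : ℝ) < s := zero_lt_one.trans_le hs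
    have hlim : Tendsto (fun t => f s / s + (|f s| + A + |B| * s) / t) atTop
        (nhds (f s / s)) := by
      simpa using (tendsto_const_nhds (x := f s / s)).add
        ((tendsto_const_nhds (x := |f s| + A + |B| * s)).div_atTop tendsto_id)
    filter_upwards [hlim.eventually (gt_mem_nhds hsc), eventually_gt_atTop 0] with t hct ht
    exact (subadditive_div_le hsub hlin hs0 ht).trans_lt hct

theorem exists_tendsto_div_of_subadditive (hsub : ∀ s t, f (s + t) ≤ f s + f t)
    (hlin : ∀ t, f t ≤ A + B * |t|) :
    ∃ m M, m ≤ M ∧ Tendsto (fun t => f t / t) atBot (nhds m) ∧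
      Tendsto (fun t => f t / t) atTop (nhds M) := by
  have hM := tendsto_div_atTop_of_subadditive hsub hlin
  have hm := tendsto_div_atTop_of_subadditive (f := fun t => f (-t))
    (fun s t => by simpa only [neg_add] using hsub (-s) (-t)) (fun t => by simpa using hlin (-t))
  refine ⟨_, _, le_of_tendsto_of_tendsto hm.neg hM ?_, ?_, hM⟩
  · filter_upwards [eventually_gt_atTop 0] with t ht
    rw [← neg_div, div_le_div_iff_of_pos_right ht]
    linarith [subadditive_apply_add_apply_neg_nonneg hsub t]
  · refine (hm.neg.comp tendsto_neg_atBot_atTop).congr fun t => ?_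
    simp [div_neg]

end Fekete

section Submultiplicative

variable {Φ : ℝ → ℝ} {B C : ℝ}

theorem Submultiplicative.pos (hΦ : Submultiplicative Φ) (h1 : Φ 1 = 1)
    (hnonneg : ∀ x, 0 ≤ Φ x) {x : ℝ} (hx : 0 < x) : 0 < Φ x := by
  have h := hΦ x hx x⁻¹ (inv_pos.2 hx)
  rw [mul_inv_cancel₀ hx.ne', h1] at h
  exact (hnonneg x).lt_of_ne fun h0 => by rw [← h0, zero_mul] at h; linarith

theorem regularFun_of_le_mul_exp (h : ∀ x, 0 < x → Φ x ≤ C * exp (B * |log x|)) :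
    RegularFun Φ := by
  have hcont : ContinuousAt (fun x => C * exp (B * |log x|)) 1 := by
    have := continuousAt_log one_ne_zero
    fun_prop
  have hnear : ∀ᶠ x in nhds 1, 0 < x ∧ C * exp (B * |log x|) < C + 1 :=
    (eventually_gt_nhds one_pos).and
      (hcont.eventually (gt_mem_nhds (by simp)))
  obtain ⟨ε, hε, hball⟩ := Metric.eventually_nhds_iff.1 hnear
  refine ⟨ε, C + 1, hε, fun x hx => ?_⟩
  obtain ⟨hx0, hxC⟩ := hball (by rwa [Real.dist_eq])
  exact (h x hx0).trans hxC.le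

theorem Submultiplicative.exists_tendsto_log_div_log (hΦ : Submultiplicative Φ)
    (hpos : ∀ x, 0 < x → 0 < Φ x) (hC : 0 < C)
    (hgrowth : ∀ x, 0 < x → Φ x ≤ C * exp (B * |log x|)) :
    ∃ m M, m ≤ M ∧
      Tendsto (fun x => log (Φ x) / log x) (nhdsWithin 0 (Ioi 0)) (nhds m) ∧
      Tendsto (fun x => log (Φ x) / log x) atTop (nhds M) := by
  set f : ℝ → ℝ := fun t => log (Φ (exp t))
  have hsub : ∀ s t, f (s + t) ≤ f s + f t := fun s t => by
    have h := hΦ _ (exp_pos s) _ (exp_pos t)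
    rw [← exp_add] at h
    rw [← log_mul (hpos _ (exp_pos s)).ne' (hpos _ (exp_pos t)).ne']
    exact log_le_log (hpos _ (exp_pos _)) h
  have hlin : ∀ t, f t ≤ log C + B * |t| := fun t => by
    have h := log_le_log (hpos _ (exp_pos t)) (hgrowth _ (exp_pos t))
    rwa [log_mul hC.ne' (exp_pos _).ne', log_exp, log_exp] at h
  obtain ⟨m, M, hmM, hm, hM⟩ := exists_tendsto_div_of_subadditive hsub hlin
  have hf : ∀ x, 0 < x → f (log x) / log x = log (Φ x) / log x := fun x hx => by
    simp only [f, exp_log hx]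
  refine ⟨m, M, hmM, ?_, ?_⟩
  · refine (hm.comp tendsto_log_nhdsGT_zero).congr' ?_
    filter_upwards [self_mem_nhdsWithin] with x hx using hf x hx
  · refine (hM.comp tendsto_log_atTop).congr' ?_
    filter_upwards [eventually_gt_atTop 0] with x hx using hf x hx

end Submultiplicative

section ClassWW

variable {ℓ : ℝ} {rho : ℝ → ℝ}

theorem rpow_le_exp_mul_abs_log {x c B : ℝ} (hx : 0 < x) (hc : |c| ≤ B) :
    x ^ c ≤ exp (B * |log x|) := by
  rw [rpow_def_of_pos hx, exp_le_exp, mul_comm B]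
  calc log x * c ≤ |log x * c| := le_abs_self _
    _ = |log x| * |c| := abs_mul _ _
    _ ≤ |log x| * B := by gcongr

theorem ClassWW.pos (h : ClassWW ℓ rho) {x : ℝ} (hx : 0 < x) (hxℓ : x ≤ ℓ) : 0 < rho x := by
  obtain ⟨a, -, ⟨-, -, hpos, -⟩, -⟩ := h
  exact pos_of_mul_pos_right (hpos x hx hxℓ) (rpow_pos_of_pos hx a).le

theorem ClassW.div_le_of_rpow_mul {a : ℝ} (h : ClassW ℓ (fun x => x ^ a * rho x))
    (hρ : ∀ x, 0 < x → x ≤ ℓ → 0 < rho x) :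
    ∃ C, 0 < C ∧ ∀ x y, 0 < x → x ≤ 1 → 0 < y → y ≤ ℓ →
      rho (x * y) / rho y ≤ C * x ^ (-a) := by
  obtain ⟨-, -, -, -, C, hC, hmono⟩ := h
  refine ⟨C, hC, fun x y hx hx1 hy hyℓ => ?_⟩
  have hxy : x * y ≤ y := mul_le_of_le_one_left hy.le hx1
  have h : (x * y) ^ a * rho (x * y) ≤ C * (y ^ a * rho y) :=
    hmono (x * y) ⟨(mul_pos hx hy).le, hxy.trans hyℓ⟩ y ⟨hy.le, hyℓ⟩ hxy
  rw [mul_rpow hx.le hy.le] at h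
  have key : x ^ a * rho (x * y) ≤ C * rho y := by
    refine le_of_mul_le_mul_right ?_ (rpow_pos_of_pos hy a)
    linarith
  rw [div_le_iff₀ (hρ y hy hyℓ), rpow_neg hx.le, mul_right_comm, ← div_eq_mul_inv,
    le_div_iff₀' (rpow_pos_of_pos hx a)]
  exact key

theorem ClassW.div_le_of_rpow_div {b : ℝ} (h : ClassW ℓ (fun x => x ^ b / rho x))
    (hρ : ∀ x, 0 < x → x ≤ ℓ → 0 < rho x) :
    ∃ C, 0 < C ∧ ∀ x y, 1 ≤ x → 0 < y → x * y ≤ ℓ →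
      rho (x * y) / rho y ≤ C * x ^ b := by
  obtain ⟨-, -, -, -, C, hC, hmono⟩ := h
  refine ⟨C, hC, fun x y hx1 hy hxyℓ => ?_⟩
  have hx : 0 < x := zero_lt_one.trans_le hx1
  have hyxy : y ≤ x * y := le_mul_of_one_le_left hy.le hx1
  have h : y ^ b / rho y ≤ C * ((x * y) ^ b / rho (x * y)) :=
    hmono y ⟨hy.le, hyxy.trans hxyℓ⟩ (x * y) ⟨(mul_pos hx hy).le, hxyℓ⟩ hyxy
  rw [mul_div_assoc', div_le_div_iff₀ (hρ y hy (hyxy.trans hxyℓ)) (hρ _ (mul_pos hx hy) hxyℓ),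
    mul_rpow hx.le hy.le] at h
  rw [div_le_iff₀ (hρ y hy (hyxy.trans hxyℓ))]
  refine le_of_mul_le_mul_left ?_ (rpow_pos_of_pos hy b)
  linarith

theorem ClassWW.exists_div_le (h : ClassWW ℓ rho) :
    ∃ C B, 0 < C ∧ ∀ x y, 0 < x → 0 < y → y ≤ ℓ → x * y ≤ ℓ →
      rho (x * y) / rho y ≤ C * exp (B * |log x|) := by
  have hρ : ∀ x, 0 < x → x ≤ ℓ → 0 < rho x := fun _ => h.pos
  obtain ⟨a, b, ha, hb⟩ := h
  obtain ⟨C₁, hC₁, h₁⟩ := ha.div_le_of_rpow_mul hρ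
  obtain ⟨C₂, hC₂, h₂⟩ := hb.div_le_of_rpow_div hρ
  refine ⟨max C₁ C₂, max |a| |b|, lt_max_of_lt_left hC₁, fun x y hx hy hyℓ hxyℓ => ?_⟩
  rcases le_total x 1 with hx1 | hx1
  · calc rho (x * y) / rho y ≤ C₁ * x ^ (-a) := h₁ x y hx hx1 hy hyℓ
      _ ≤ max C₁ C₂ * exp (max |a| |b| * |log x|) := by
        gcongr
        · exact le_max_left _ _
        · exact rpow_le_exp_mul_abs_log hx ((abs_neg a).trans_le (le_max_left _ _))
  · calc rho (x * y) / rho y ≤ C₂ * x ^ b := h₂ x y hx1 hy hxyℓ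
      _ ≤ max C₁ C₂ * exp (max |a| |b| * |log x|) := by
        gcongr
        · exact le_max_right _ _
        · exact rpow_le_exp_mul_abs_log hx (le_max_right _ _)

end ClassWW

section Phi0

variable {ℓ : ℝ} {rho : ℝ → ℝ}

theorem eventually_nhdsGT_zero_mul_le (hℓ : 0 < ℓ) {x : ℝ} (hx : 0 < x) :
    ∀ᶠ y in nhdsWithin (0 : ℝ) (Ioi 0), 0 < y ∧ y ≤ ℓ ∧ x * y ≤ ℓ := by
  have hle : ∀ᶠ y in nhdsWithin (0 : ℝ) (Ioi 0), y ≤ ℓ :=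
    nhdsWithin_le_nhds (eventually_le_nhds hℓ)
  filter_upwards [self_mem_nhdsWithin, hle, eventually_nhdsGT_zero_mul_left hx hle]
    with y hy hyℓ hxyℓ using ⟨hy, hyℓ, hxyℓ⟩

theorem Phi0E_le_ofReal {x c : ℝ}
    (h : ∀ᶠ y in nhdsWithin (0 : ℝ) (Ioi 0), rho (x * y) / rho y ≤ c) :
    Phi0E rho x ≤ ENNReal.ofReal c :=
  limsup_le_of_le (by isBoundedDefault) (h.mono fun _ hy => ENNReal.ofReal_le_ofReal hy)

theorem Phi0E_one (hℓ : 0 < ℓ) (hρ : ∀ x, 0 < x → x ≤ ℓ → 0 < rho x) : Phi0E rho 1 = 1 := by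
  have h : ∀ᶠ y in nhdsWithin (0 : ℝ) (Ioi 0), ENNReal.ofReal (rho (1 * y) / rho y) = 1 := by
    filter_upwards [eventually_nhdsGT_zero_mul_le hℓ one_pos] with y ⟨hy, hyℓ, _⟩
    rw [one_mul, div_self (hρ y hy hyℓ).ne', ENNReal.ofReal_one]
  rw [Phi0E, limsup_congr h, limsup_const]

theorem Phi0E_mul_le (hℓ : 0 < ℓ) (hρ : ∀ x, 0 < x → x ≤ ℓ → 0 < rho x) {x y : ℝ}
    (hy : 0 < y) (hxfin : Phi0E rho x ≠ ⊤) (hyfin : Phi0E rho y ≠ ⊤) :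
    Phi0E rho (x * y) ≤ Phi0E rho x * Phi0E rho y := by
  set u : ℝ → ℝ≥0∞ := fun z => ENNReal.ofReal (rho (x * (y * z)) / rho (y * z))
  set v : ℝ → ℝ≥0∞ := fun z => ENNReal.ofReal (rho (y * z) / rho z)
  have hmul : Tendsto (y * ·) (nhdsWithin (0 : ℝ) (Ioi 0)) (nhdsWithin 0 (Ioi 0)) := by
    simpa only [comap_mulLeft_nhdsGT_zero hy] using
      tendsto_comap (f := (y * ·)) (x := nhdsWithin (0 : ℝ) (Ioi 0))
  have hu : limsup u (nhdsWithin 0 (Ioi 0)) ≤ Phi0E rho x :=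
    hmul.limsup_comp_le_limsup (u := fun w => ENNReal.ofReal (rho (x * w) / rho w))
  have hfactor : (fun z => ENNReal.ofReal (rho (x * y * z) / rho z)) =ᶠ[nhdsWithin 0 (Ioi 0)]
      u * v := by
    filter_upwards [eventually_nhdsGT_zero_mul_le hℓ hy] with z ⟨hz, hzℓ, hyzℓ⟩
    have hρz := hρ z hz hzℓ
    have hρyz := hρ _ (mul_pos hy hz) hyzℓ
    rw [Pi.mul_apply, ← ENNReal.ofReal_mul' (div_nonneg hρyz.le hρz.le), mul_assoc,
      div_mul_div_cancel₀ hρyz.ne']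
  calc Phi0E rho (x * y) = limsup (u * v) (nhdsWithin 0 (Ioi 0)) := limsup_congr hfactor
    _ ≤ limsup u (nhdsWithin 0 (Ioi 0)) * limsup v (nhdsWithin 0 (Ioi 0)) :=
      ENNReal.limsup_mul_le' (Or.inr hyfin) (Or.inl (ne_top_of_le_ne_top hxfin hu))
    _ ≤ Phi0E rho x * Phi0E rho y := mul_le_mul_left hu _

end Phi0

/-- If `ℓ > 0` and `ϱ ∈ 𝕎` (with respect to `[0,ℓ]`), then
`Φ⁰_ϱ(x) = limsup_{y → 0} ϱ(xy)/ϱ(y)` is finite-valued, regular and submultiplicative;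
consequently the limits `m(ϱ) = lim_{x → 0} log Φ⁰_ϱ(x)/log x` and
`M(ϱ) = lim_{x → ∞} log Φ⁰_ϱ(x)/log x` exist and `-∞ < m(ϱ) ≤ M(ϱ) < +∞`. -/
theorem statement9 (ℓ : ℝ) (hℓ : 0 < ℓ) (rho : ℝ → ℝ) (hrho : ClassWW ℓ rho) :
    (∀ x : ℝ, 0 < x → Phi0E rho x ≠ ⊤) ∧
    RegularFun (Phi0 rho) ∧ Submultiplicative (Phi0 rho) ∧
    Tendsto (fun x => Real.log (Phi0 rho x) / Real.log x) (nhdsWithin (0:ℝ) (Ioi 0))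
      (nhds (moIndexLower rho)) ∧
    Tendsto (fun x => Real.log (Phi0 rho x) / Real.log x) atTop
      (nhds (moIndexUpper rho)) ∧
    moIndexLower rho ≤ moIndexUpper rho := by
  have hρ : ∀ x, 0 < x → x ≤ ℓ → 0 < rho x := fun _ => hrho.pos
  obtain ⟨C, B, hC, hratio⟩ := hrho.exists_div_le
  have hle : ∀ x, 0 < x → Phi0E rho x ≤ ENNReal.ofReal (C * exp (B * |log x|)) :=
    fun x hx => Phi0E_le_ofReal <| (eventually_nhdsGT_zero_mul_le hℓ hx).mono
      fun y ⟨hy, hyℓ, hxyℓ⟩ => hratio x y hx hy hyℓ hxyℓ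
  have hfin : ∀ x, 0 < x → Phi0E rho x ≠ ⊤ :=
    fun x hx => ne_top_of_le_ne_top ENNReal.ofReal_ne_top (hle x hx)
  have hbound : ∀ x, 0 < x → Phi0 rho x ≤ C * exp (B * |log x|) :=
    fun x hx => ENNReal.toReal_le_of_le_ofReal (by positivity) (hle x hx)
  have hsub : Submultiplicative (Phi0 rho) := fun x hx y hy => by
    rw [Phi0, Phi0, Phi0, ← ENNReal.toReal_mul]
    exact ENNReal.toReal_mono (ENNReal.mul_ne_top (hfin x hx) (hfin y hy))
      (Phi0E_mul_le hℓ hρ hy (hfin x hx) (hfin y hy))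
  have hpos : ∀ x, 0 < x → 0 < Phi0 rho x := fun x =>
    hsub.pos (by rw [Phi0, Phi0E_one hℓ hρ, ENNReal.toReal_one]) (fun _ => ENNReal.toReal_nonneg)
  obtain ⟨m, M, hmM, hm, hM⟩ := hsub.exists_tendsto_log_div_log hpos hC hbound
  rw [moIndexLower, hm.limUnder_eq, moIndexUpper, hM.limUnder_eq]
  exact ⟨hfin, regularFun_of_le_mul_exp hbound, hsub, hm, hM, hmM⟩

end
end

section
/- For 1 < α < 2, the curve Γ_α := {0} ∪ {τ ∈ ℂ : τ = x + i x^α sin(1/x), 0 < x ≤ 1} is rectifiable (the path γ(0) = 0, γ(x) = x + i x^α sin(1/x) for 0 < x ≤ 1 has finite length) but is not a Carleson curve: with arc-length measure on Γ_α, sup_{t∈Γ_α} sup_{R>0} |Γ_α(t,R)|/R = ∞ (indeed this supremum is already infinite at the point t = 0). -/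
open MeasureTheory Metric Set Filter
open scoped ENNReal

noncomputable section

/-- The spiral-like path `γ(x) = x + i x^α sin(1/x)` (with `γ(0) = 0`). -/
def oscCurve (a : ℝ) (x : ℝ) : ℂ :=
  Complex.ofReal x + Complex.I * Complex.ofReal (x ^ a * Real.sin x⁻¹)

/-!
Near `0` the speed of `γ` is of order `x ^ (a - 2)`, which is integrable because `a > 1`:
after the substitution `x = s ^ (1 / (a - 1))` the curve becomes Lipschitz, so it has finite
variation and finite length. On the other hand, between consecutive peaks of `sin (1 / x)` the
imaginary part of `γ` swings by about `x ^ a`; in the ball of radius `≍ 1 / K` around `0` there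
are `K` such arcs with `x ≍ 1 / K`, so `|Γ(0, R)| / R ≳ K ^ (2 - a)`, which is unbounded
because `a < 2`.
-/

open Real Topology Function

section General

variable {E : Type*} [NormedAddCommGroup E] [NormedSpace ℝ E]

theorem lipschitzOnWith_comp_rpow_inv {f f' : ℝ → E} {β C : ℝ} (hβ : 0 < β)
    (hf : ∀ x ∈ Ioc (0 : ℝ) 1, HasDerivAt f (f' x) x)
    (hf' : ∀ x ∈ Ioc (0 : ℝ) 1, ‖f' x‖ ≤ C * x ^ (β - 1)) :
    LipschitzOnWith (C / β).toNNReal (fun s => f (s ^ β⁻¹)) (Ioc 0 1) := by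
  have hmaps : ∀ s ∈ Ioc (0 : ℝ) 1, s ^ β⁻¹ ∈ Ioc (0 : ℝ) 1 := fun s hs =>
    ⟨rpow_pos_of_pos hs.1 _, rpow_le_one hs.1.le hs.2 (inv_nonneg.2 hβ.le)⟩
  refine (convex_Ioc 0 1).lipschitzOnWith_of_nnnorm_hasDerivWithin_le
    (f' := fun s => (β⁻¹ * s ^ (β⁻¹ - 1)) • f' (s ^ β⁻¹)) (fun s hs => ?_) fun s hs => ?_
  · exact ((hf _ (hmaps s hs)).scomp s
      (hasDerivAt_rpow_const (Or.inl hs.1.ne'))).hasDerivWithinAt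
  · have hs0 := hs.1
    have hexp : s ^ (β⁻¹ - 1) * (s ^ β⁻¹) ^ (β - 1) = 1 := by
      rw [← rpow_mul hs0.le, ← rpow_add hs0, show β⁻¹ - 1 + β⁻¹ * (β - 1) = 0 by
        field_simp; ring, rpow_zero]
    rw [← norm_toNNReal]
    refine Real.toNNReal_le_toNNReal ?_
    calc ‖(β⁻¹ * s ^ (β⁻¹ - 1)) • f' (s ^ β⁻¹)‖
        = β⁻¹ * s ^ (β⁻¹ - 1) * ‖f' (s ^ β⁻¹)‖ := by
          rw [norm_smul, Real.norm_of_nonneg (by positivity)]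
      _ ≤ β⁻¹ * s ^ (β⁻¹ - 1) * (C * (s ^ β⁻¹) ^ (β - 1)) := by
          gcongr; exact hf' _ (hmaps s hs)
      _ = C / β * (s ^ (β⁻¹ - 1) * (s ^ β⁻¹) ^ (β - 1)) := by ring
      _ = C / β := by rw [hexp, mul_one]

theorem image_rpow_Icc_zero_one {r : ℝ} (hr : 0 < r) :
    (fun s : ℝ => s ^ r) '' Icc 0 1 = Icc 0 1 := by
  refine Subset.antisymm ?_ fun x hx => ⟨x ^ r⁻¹, ?_, rpow_inv_rpow hx.1 hr.ne'⟩
  · rintro _ ⟨s, hs, rfl⟩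
    exact ⟨rpow_nonneg hs.1 _, rpow_le_one hs.1 hs.2 hr.le⟩
  · exact ⟨rpow_nonneg hx.1 _, rpow_le_one hx.1 hx.2 (inv_nonneg.2 hr.le)⟩

variable [MeasurableSpace E] [BorelSpace E]

theorem edist_le_hausdorffMeasure_image {f : ℝ → E} {u v : ℝ} (huv : u ≤ v)
    (hf : ContinuousOn f (Icc u v)) : edist (f u) (f v) ≤ μH[1] (f '' Icc u v) := by
  rcases eq_or_ne ‖f v - f u‖ 0 with h | h
  · rw [edist_dist, dist_comm, dist_eq_norm, h, ENNReal.ofReal_zero]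
    exact bot_le
  obtain ⟨ℓ, hℓ, hℓv⟩ := exists_dual_vector ℝ (f v - f u) h
  have hIcc : Icc (ℓ (f u)) (ℓ (f v)) ⊆ ℓ '' (f '' Icc u v) := by
    rw [image_image]
    exact intermediate_value_Icc huv (ℓ.continuous.comp_continuousOn hf)
  have hℓ₁ : ‖ℓ‖₊ = 1 := Subtype.ext hℓ
  calc edist (f u) (f v) = ENNReal.ofReal (ℓ (f v) - ℓ (f u)) := by
        rw [edist_dist, dist_comm, dist_eq_norm, ← map_sub, hℓv, RCLike.ofReal_real_eq_id, id]
    _ = μH[1] (Icc (ℓ (f u)) (ℓ (f v))) := by rw [hausdorffMeasure_real, Real.volume_Icc]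
    _ ≤ μH[1] (ℓ '' (f '' Icc u v)) := measure_mono hIcc
    _ ≤ μH[1] (f '' Icc u v) := by
        simpa [hℓ₁] using ℓ.lipschitz.hausdorffMeasure_image_le zero_le_one (f '' Icc u v)

end General

section Rectifiable

variable {a x : ℝ}

@[simp]
theorem oscCurve_re : (oscCurve a x).re = x := by
  simp only [oscCurve, Complex.add_re, Complex.ofReal_re, Complex.mul_re, Complex.I_re,
    Complex.I_im, Complex.ofReal_im]
  ring

@[simp]
theorem oscCurve_im : (oscCurve a x).im = x ^ a * sin x⁻¹ := by
  simp only [oscCurve, Complex.add_im, Complex.ofReal_im, Complex.mul_im, Complex.I_re,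
    Complex.I_im, Complex.ofReal_re]
  ring

@[simp]
theorem oscCurve_zero : oscCurve a 0 = 0 := by simp [oscCurve]

theorem norm_oscCurve_le (ha : 1 ≤ a) (hx : x ∈ Icc (0 : ℝ) 1) : ‖oscCurve a x‖ ≤ 2 * x := by
  have him : |x ^ a * sin x⁻¹| ≤ x := by
    rw [abs_mul, abs_of_nonneg (rpow_nonneg hx.1 a)]
    calc x ^ a * |sin x⁻¹| ≤ x ^ a * 1 :=
          mul_le_mul_of_nonneg_left (abs_sin_le_one _) (rpow_nonneg hx.1 a)
      _ ≤ x ^ (1 : ℝ) := by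
          rw [mul_one]; exact rpow_le_rpow_of_exponent_ge' hx.1 hx.2 zero_le_one ha
      _ = x := rpow_one x
  calc ‖oscCurve a x‖ ≤ |(oscCurve a x).re| + |(oscCurve a x).im| :=
        Complex.norm_le_abs_re_add_abs_im _
    _ ≤ 2 * x := by rw [oscCurve_re, oscCurve_im, abs_of_nonneg hx.1]; linarith

def oscCurveDeriv (a x : ℝ) : ℂ :=
  1 + Complex.I * ↑(a * x ^ (a - 1) * sin x⁻¹ - x ^ (a - 2) * cos x⁻¹)

theorem hasDerivAt_oscCurve (hx : 0 < x) :
    HasDerivAt (oscCurve a) (oscCurveDeriv a x) x := by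
  have him : HasDerivAt (fun y => y ^ a * sin y⁻¹)
      (a * x ^ (a - 1) * sin x⁻¹ - x ^ (a - 2) * cos x⁻¹) x := by
    refine ((hasDerivAt_rpow_const (p := a) (Or.inl hx.ne')).mul
      ((hasDerivAt_sin x⁻¹).comp x (hasDerivAt_inv hx.ne'))).congr_deriv ?_
    rw [rpow_sub hx a 2, rpow_two, Function.comp_apply]
    field_simp
    ring
  exact (Complex.ofRealCLM.hasDerivAt.add (him.ofReal_comp.const_mul Complex.I)).congr_deriv
    (by simp [oscCurveDeriv])

theorem norm_oscCurveDeriv_le (ha0 : 0 ≤ a) (ha2 : a ≤ 2) (hx : x ∈ Ioc (0 : ℝ) 1) :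
    ‖oscCurveDeriv a x‖ ≤ (a + 2) * x ^ (a - 2) := by
  obtain ⟨hx0, hx1⟩ := hx
  have hone : 1 ≤ x ^ (a - 2) := one_le_rpow_of_pos_of_le_one_of_nonpos hx0 hx1 (by linarith)
  have hsin : a * x ^ (a - 1) * |sin x⁻¹| ≤ a * x ^ (a - 2) :=
    calc a * x ^ (a - 1) * |sin x⁻¹| ≤ a * x ^ (a - 1) :=
          mul_le_of_le_one_right (by positivity) (abs_sin_le_one _)
      _ ≤ a * x ^ (a - 2) := mul_le_mul_of_nonneg_left
          (rpow_le_rpow_of_exponent_ge hx0 hx1 (by linarith)) ha0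
  have hcos : x ^ (a - 2) * |cos x⁻¹| ≤ x ^ (a - 2) :=
    mul_le_of_le_one_right (by positivity) (abs_cos_le_one _)
  calc ‖oscCurveDeriv a x‖
      ≤ 1 + |a * x ^ (a - 1) * sin x⁻¹ - x ^ (a - 2) * cos x⁻¹| := by
        refine (norm_add_le _ _).trans_eq ?_
        rw [norm_one, norm_mul, Complex.norm_I, one_mul, Complex.norm_real, Real.norm_eq_abs]
    _ ≤ 1 + (a * x ^ (a - 1) * |sin x⁻¹| + x ^ (a - 2) * |cos x⁻¹|) := by
        gcongr
        refine (abs_sub _ _).trans_eq ?_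
        rw [abs_mul, abs_mul, abs_mul, abs_of_nonneg ha0, abs_of_nonneg (rpow_nonneg hx0.le _),
          abs_of_nonneg (rpow_nonneg hx0.le _)]
    _ ≤ (a + 2) * x ^ (a - 2) := by nlinarith

theorem continuousOn_oscCurve (ha : 1 ≤ a) : ContinuousOn (oscCurve a) (Icc 0 1) := by
  intro x hx
  rcases hx.1.eq_or_lt with rfl | hx0
  · have hlin : Tendsto (fun y : ℝ => 2 * y) (𝓝[Icc 0 1] 0) (𝓝 0) := by
      simpa using tendsto_nhdsWithin_of_tendsto_nhds ((continuous_const_mul (2 : ℝ)).tendsto 0)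
    simpa [ContinuousWithinAt] using
      squeeze_zero_norm' (eventually_nhdsWithin_of_forall fun y hy => norm_oscCurve_le ha hy) hlin
  · exact (hasDerivAt_oscCurve hx0).continuousAt.continuousWithinAt

theorem lipschitzOnWith_oscCurve_comp_rpow (ha1 : 1 < a) (ha2 : a ≤ 2) :
    LipschitzOnWith ((a + 2) / (a - 1)).toNNReal (fun s => oscCurve a (s ^ (a - 1)⁻¹))
      (Icc 0 1) := by
  have hβ : 0 < a - 1 := sub_pos.2 ha1
  have hmaps : MapsTo (fun s : ℝ => s ^ (a - 1)⁻¹) (Icc 0 1) (Icc 0 1) :=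
    mapsTo_iff_image_subset.2 (image_rpow_Icc_zero_one (inv_pos.2 hβ)).subset
  rw [← closure_Ioc zero_ne_one]
  refine LipschitzOnWith.closure ?_ (lipschitzOnWith_comp_rpow_inv hβ
    (fun x hx => hasDerivAt_oscCurve hx.1) fun x hx => ?_)
  · rw [closure_Ioc zero_ne_one]
    exact (continuousOn_oscCurve ha1.le).comp
      (continuous_rpow_const (inv_pos.2 hβ).le).continuousOn hmaps
  · rw [show a - 1 - 1 = a - 2 by ring]
    exact norm_oscCurveDeriv_le (by linarith) ha2 hx

theorem eVariationOn_oscCurve_ne_top (ha1 : 1 < a) (ha2 : a ≤ 2) :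
    eVariationOn (oscCurve a) (Icc 0 1) ≠ ⊤ := by
  have hr : 0 < (a - 1)⁻¹ := inv_pos.2 (sub_pos.2 ha1)
  rw [← image_rpow_Icc_zero_one hr, ← eVariationOn.comp_eq_of_monotoneOn _ _
    ((monotoneOn_rpow_Ici_of_exponent_nonneg hr.le).mono Icc_subset_Ici_self)]
  have h := (lipschitzOnWith_oscCurve_comp_rpow ha1 ha2).locallyBoundedVariationOn 0 1
    (left_mem_Icc.2 zero_le_one) (right_mem_Icc.2 zero_le_one)
  rw [inter_self] at h
  exact h

theorem hausdorffMeasure_image_oscCurve_lt_top (ha1 : 1 < a) (ha2 : a ≤ 2) :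
    μH[1] (oscCurve a '' Icc 0 1) < ⊤ := by
  rw [← image_rpow_Icc_zero_one (inv_pos.2 (sub_pos.2 ha1)), image_image]
  calc _ ≤ _ :=
      (lipschitzOnWith_oscCurve_comp_rpow ha1 ha2).hausdorffMeasure_image_le zero_le_one
    _ < ⊤ := by simp [hausdorffMeasure_real]

end Rectifiable

section NotCarleson

variable {a : ℝ}

theorem oscCurve_injective : Injective (oscCurve a) := fun x y h => by
  simpa using congrArg Complex.re h

def oscPeak (n : ℕ) : ℝ := (π / 2 + n * π)⁻¹

theorem oscPeak_pos (n : ℕ) : 0 < oscPeak n := inv_pos.2 (by positivity)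

theorem oscPeak_strictAnti : StrictAnti oscPeak := fun m n hmn => by
  have : (m : ℝ) < n := Nat.cast_lt.2 hmn
  exact inv_strictAnti₀ (by positivity) (by nlinarith [pi_pos])

theorem oscPeak_lt_one (n : ℕ) : oscPeak n < 1 :=
  inv_lt_one_of_one_lt₀ (by nlinarith [pi_gt_three, (Nat.cast_nonneg n : (0 : ℝ) ≤ n)])

theorem sin_inv_oscPeak (n : ℕ) : sin (oscPeak n)⁻¹ = (-1) ^ n := by
  rw [oscPeak, inv_inv, add_comm, sin_add_pi_div_two, cos_nat_mul_pi]

def oscArc (a : ℝ) (n : ℕ) : Set ℂ := oscCurve a '' Icc (oscPeak (2 * n + 1)) (oscPeak (2 * n))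

theorem Icc_oscPeak_subset (n : ℕ) : Icc (oscPeak (2 * n + 1)) (oscPeak (2 * n)) ⊆ Icc 0 1 :=
  Icc_subset_Icc (oscPeak_pos _).le (oscPeak_lt_one _).le

theorem ofReal_oscPeak_rpow_le_hausdorffMeasure_oscArc (ha : 1 ≤ a) (n : ℕ) :
    ENNReal.ofReal (oscPeak (2 * n + 1) ^ a) ≤ μH[1] (oscArc a n) := by
  set u := oscPeak (2 * n + 1)
  set v := oscPeak (2 * n)
  have huv : u ≤ v := oscPeak_strictAnti.antitone (by omega)
  refine le_trans ?_ (edist_le_hausdorffMeasure_image huv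
    ((continuousOn_oscCurve ha).mono (Icc_oscPeak_subset n)))
  rw [edist_dist]
  refine ENNReal.ofReal_le_ofReal ?_
  have hu : 0 ≤ u ^ a := rpow_nonneg (oscPeak_pos _).le a
  have hv : 0 ≤ v ^ a := rpow_nonneg (oscPeak_pos _).le a
  calc u ^ a ≤ u ^ a + v ^ a := le_add_of_nonneg_right hv
    _ = |(oscCurve a u - oscCurve a v).im| := by
        rw [Complex.sub_im, oscCurve_im, oscCurve_im, sin_inv_oscPeak, sin_inv_oscPeak,
          (odd_two_mul_add_one n).neg_one_pow, (even_two_mul n).neg_one_pow, mul_neg_one,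
          mul_one, abs_of_nonpos (by linarith)]
        ring
    _ ≤ dist (oscCurve a u) (oscCurve a v) := by
        rw [dist_eq_norm]; exact Complex.abs_im_le_norm _

theorem measurableSet_oscArc (ha : 1 ≤ a) (n : ℕ) : MeasurableSet (oscArc a n) :=
  (isCompact_Icc.image_of_continuousOn
    ((continuousOn_oscCurve ha).mono (Icc_oscPeak_subset n))).measurableSet

theorem pairwise_disjoint_oscArc : Pairwise (Disjoint on (oscArc a)) := by
  intro m n hmn
  wlog h : m < n generalizing m n
  · exact (this hmn.symm (lt_of_le_of_ne (not_lt.1 h) hmn.symm)).symm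
  refine (disjoint_image_iff oscCurve_injective).2 (Set.disjoint_left.2 fun x hxm hxn => ?_)
  linarith [hxm.1, hxn.2, oscPeak_strictAnti (show 2 * m + 1 < 2 * n by omega)]

theorem oscArc_subset_ball (ha : 1 ≤ a) {K n : ℕ} (hKn : K ≤ n) :
    oscArc a n ⊆ ball 0 (3 * oscPeak (2 * K)) ∩ oscCurve a '' Icc 0 1 := by
  rintro _ ⟨x, hx, rfl⟩
  have hx0 : 0 < x := (oscPeak_pos _).trans_le hx.1
  have hxK : x ≤ oscPeak (2 * K) := hx.2.trans (oscPeak_strictAnti.antitone (by omega))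
  have hx1 : x ∈ Icc (0 : ℝ) 1 := Icc_oscPeak_subset n hx
  refine ⟨?_, mem_image_of_mem _ hx1⟩
  rw [mem_ball_zero_iff]
  linarith [norm_oscCurve_le ha hx1]

theorem ofReal_le_arcMeasure_ball (ha : 1 ≤ a) (K : ℕ) :
    ENNReal.ofReal (K * oscPeak (4 * K) ^ a) ≤
      arcMeasure (oscCurve a '' Icc 0 1) (ball 0 (3 * oscPeak (2 * K))) := by
  rw [arcMeasure, Measure.restrict_apply measurableSet_ball]
  calc ENNReal.ofReal (K * oscPeak (4 * K) ^ a)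
      = ∑ _n ∈ Finset.Ico K (2 * K), ENNReal.ofReal (oscPeak (4 * K) ^ a) := by
        rw [Finset.sum_const, Nat.card_Ico, show 2 * K - K = K by omega, nsmul_eq_mul,
          ENNReal.ofReal_mul (Nat.cast_nonneg _), ENNReal.ofReal_natCast]
    _ ≤ ∑ n ∈ Finset.Ico K (2 * K), μH[1] (oscArc a n) := by
        refine Finset.sum_le_sum fun n hn => le_trans ?_
          (ofReal_oscPeak_rpow_le_hausdorffMeasure_oscArc ha n)
        rw [Finset.mem_Ico] at hn
        exact ENNReal.ofReal_le_ofReal (rpow_le_rpow (oscPeak_pos _).le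
          (oscPeak_strictAnti.antitone (by omega)) (by linarith))
    _ = μH[1] (⋃ n ∈ Finset.Ico K (2 * K), oscArc a n) :=
        (measure_biUnion_finset (pairwise_disjoint_oscArc.set_pairwise _)
          fun n _ => measurableSet_oscArc ha n).symm
    _ ≤ _ := measure_mono (iUnion₂_subset fun n hn =>
        oscArc_subset_ball ha (Finset.mem_Ico.1 hn).1)

theorem not_exists_arcMeasure_ball_zero_le (ha1 : 1 < a) (ha2 : a < 2) :
    ¬ ∃ C : ℝ, ∀ R : ℝ, 0 < R →
      (arcMeasure (oscCurve a '' Icc 0 1) (ball 0 R)).toReal ≤ C * R := by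
  rintro ⟨C, hC⟩
  have hfin (R : ℝ) : arcMeasure (oscCurve a '' Icc 0 1) (ball 0 R) ≠ ⊤ :=
    ne_top_of_le_ne_top (hausdorffMeasure_image_oscCurve_lt_top ha1 ha2.le).ne
      ((measure_mono (subset_univ _)).trans_eq (Measure.restrict_apply_univ _))
  have hbound (K : ℕ) (hK : 1 ≤ K) : (K : ℝ) ^ (2 - a) ≤ 3 * |C| * 20 ^ a := by
    have hK1 : (1 : ℝ) ≤ K := Nat.one_le_cast.2 hK
    have hK0 : (0 : ℝ) < K := by linarith
    have hball := (ENNReal.ofReal_le_iff_le_toReal (hfin _)).1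
      (ofReal_le_arcMeasure_ball ha1.le K) |>.trans (hC _ (by positivity [oscPeak_pos (2 * K)]))
    have hlow : (20 * (K : ℝ))⁻¹ ≤ oscPeak (4 * K) := by
      refine inv_anti₀ (by positivity) ?_
      push_cast
      nlinarith [pi_le_four]
    have hup : oscPeak (2 * K) ≤ (K : ℝ)⁻¹ := by
      refine inv_anti₀ hK0 ?_
      push_cast
      nlinarith [pi_gt_three]
    calc (K : ℝ) ^ (2 - a) = K * ((20 * (K : ℝ))⁻¹) ^ a * K * 20 ^ a := by
          rw [inv_rpow (by positivity), mul_rpow (by norm_num) hK0.le, rpow_sub hK0, rpow_two]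
          field_simp
      _ ≤ K * oscPeak (4 * K) ^ a * K * 20 ^ a := by gcongr
      _ ≤ C * (3 * oscPeak (2 * K)) * K * 20 ^ a := by gcongr
      _ ≤ |C| * (3 * (K : ℝ)⁻¹) * K * 20 ^ a := by
          gcongr ?_ * _ * _
          exact mul_le_mul (le_abs_self C) (by linarith) (by positivity [oscPeak_pos (2 * K)])
            (abs_nonneg C)
      _ = 3 * |C| * 20 ^ a := by field_simp
  obtain ⟨K, hK, hK1⟩ := (((tendsto_rpow_atTop (by linarith : 0 < 2 - a)).comp
    tendsto_natCast_atTop_atTop).eventually_gt_atTop (3 * |C| * 20 ^ a) |>.and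
    (eventually_ge_atTop 1)).exists
  exact (hbound K hK1).not_gt hK

end NotCarleson

/-- For `1 < α < 2`, the curve `Γ_α = {0} ∪ {x + i x^α sin(1/x) : 0 < x ≤ 1}` is
rectifiable but not a Carleson curve; indeed `sup_{R > 0} |Γ_α(t,R)|/R = ∞` already at
the point `t = 0`. -/
theorem statement14 (a : ℝ) (ha1 : 1 < a) (ha2 : a < 2) :
    eVariationOn (oscCurve a) (Icc 0 1) ≠ ⊤ ∧
    ¬ IsCarleson (oscCurve a '' Icc 0 1) ∧
    ¬ ∃ C : ℝ, ∀ R : ℝ, 0 < R →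
      (arcMeasure (oscCurve a '' Icc 0 1) (ball 0 R)).toReal ≤ C * R := by
  have hzero : (0 : ℂ) ∈ oscCurve a '' Icc 0 1 :=
    ⟨0, left_mem_Icc.2 zero_le_one, oscCurve_zero⟩
  refine ⟨eVariationOn_oscCurve_ne_top ha1 ha2.le, ?_,
    not_exists_arcMeasure_ball_zero_le ha1 ha2⟩
  rintro ⟨C, hC⟩
  exact not_exists_arcMeasure_ball_zero_le ha1 ha2 ⟨C, hC 0 hzero⟩

end
end
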